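/- arXiv:2506.01972 — 2 statements merged into one kernel-verified Lean document; each statement's English description precedes it below -/
import Mathlib

section
/- Let α ∈ (0,1), Θ, θ⁰, μ ∈ ℝ and σ > 0. Then sSup { ⨅_{β ∈ ℝ} (β + (1-α)⁻¹ · ∫ max(Θx + θ⁰ - β, 0) dP(x)) : P is a Borel probability measure on ℝ with finite second moment, mean μ and variance σ² } = Θμ + θ⁰ + |Θ|·σ·Real.sqrt (α/(1-α)). -/
/-!
Write `m` and `v` for the mean and variance of the loss `f`. Since `max y 0 ≤ (y + t)² / (4t)`
for every `t > 0`, the Rockafellar–Uryasev objective at `β = m + t(2α - 1)` is at most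
`m + tα + v / (4t(1 - α))`, and minimising over `t` gives the bound `m + √v · √(α / (1 - α))`,
which depends on the distribution only through `m` and `v`. The bound is attained by a two-point
distribution that puts mass `1 - α` on `μ + σ√(α / (1 - α))` and mass `α` on
`μ - σ√((1 - α) / α)` (reflected when `Θ < 0`): its CVaR is the value of the loss at the upper
point.
-/

open MeasureTheory ProbabilityTheory

/-- The Rockafellar–Uryasev objective: `CVaR_α^P(f)` is its infimum over `β`. -/
noncomputable def cvarObjective {Ω : Type*} [MeasurableSpace Ω] (α : ℝ) (P : Measure Ω)
    (f : Ω → ℝ) (β : ℝ) : ℝ :=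
  β + (1 - α)⁻¹ * ∫ x, max (f x - β) 0 ∂P

lemma max_zero_le_sq_div {y t : ℝ} (ht : 0 < t) : max y 0 ≤ (y + t) ^ 2 / (4 * t) := by
  rw [le_div_iff₀ (by positivity)]
  rcases le_total y 0 with hy | hy
  · rw [max_eq_right hy, zero_mul]; positivity
  · rw [max_eq_left hy]; nlinarith [sq_nonneg (y - t)]

lemma le_add_sqrt_mul_sqrt_div {x m a b v : ℝ} (ha : 0 < a) (hb : 0 < b) (hv : 0 ≤ v)
    (h : ∀ t > 0, x ≤ m + t * a + v / (4 * t * b)) :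
    x ≤ m + √v * √(a / b) := by
  rcases hv.eq_or_lt with rfl | hv
  · refine le_of_forall_pos_le_add fun ε hε => ?_
    simpa [div_mul_cancel₀ ε ha.ne'] using h (ε / a) (by positivity)
  · set w := √(a / b)
    have hwb : w ^ 2 * b = a := by
      rw [Real.sq_sqrt (by positivity), div_mul_cancel₀ a hb.ne']
    have hu2 := Real.sq_sqrt hv.le
    set u := √v
    -- `u / (2 * w * b)` minimises `t * a + v / (4 * t * b)`
    convert h (u / (2 * w * b)) (by positivity) using 1
    rw [← hu2, ← hwb]
    field_simp
    ring

section

variable {Ω : Type*} [MeasurableSpace Ω] {P : Measure Ω} [IsProbabilityMeasure P]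
  {f : Ω → ℝ} {α : ℝ}

lemma integral_le_cvarObjective (hα0 : 0 ≤ α) (hα1 : α < 1) (hf : Integrable f P) (β : ℝ) :
    ∫ x, f x ∂P ≤ cvarObjective α P f β := by
  have hpos : Integrable (fun x => max (f x - β) 0) P := (hf.sub (integrable_const β)).pos_part
  have hinv : 1 ≤ (1 - α)⁻¹ := (one_le_inv₀ (by linarith)).2 (by linarith)
  calc ∫ x, f x ∂P ≤ ∫ x, (β + max (f x - β) 0) ∂P :=
        integral_mono hf ((integrable_const β).add hpos) fun x => by
          linarith [le_max_left (f x - β) 0]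
    _ = β + ∫ x, max (f x - β) 0 ∂P := by
        rw [integral_add (integrable_const β) hpos, integral_const]; simp
    _ ≤ cvarObjective α P f β := by
        unfold cvarObjective
        gcongr
        exact le_mul_of_one_le_left (integral_nonneg fun _ => le_max_right _ _) hinv

lemma integral_sub_const_sq (hf : MemLp f 2 P) (c : ℝ) :
    ∫ x, (f x - c) ^ 2 ∂P = Var[f; P] + (∫ x, f x ∂P - c) ^ 2 := by
  have h := variance_eq_sub (X := fun x => f x - c) (hf.sub (memLp_const c))
  rw [variance_sub_const hf.aestronglyMeasurable] at h
  rw [h, integral_sub (hf.integrable one_le_two) (integrable_const c), integral_const]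
  simp

lemma cvarObjective_le_add_variance_div (hα1 : α < 1) (hf : MemLp f 2 P) {t : ℝ} (ht : 0 < t) :
    cvarObjective α P f (∫ x, f x ∂P + t * (2 * α - 1))
      ≤ ∫ x, f x ∂P + t * α + Var[f; P] / (4 * t * (1 - α)) := by
  set m := ∫ x, f x ∂P
  set β := m + t * (2 * α - 1)
  have h1α : 0 < 1 - α := by linarith
  have hsq : Integrable (fun x => (f x - (β - t)) ^ 2) P :=
    (hf.sub (memLp_const (β - t))).integrable_sq
  have hmax : ∫ x, max (f x - β) 0 ∂P ≤ (Var[f; P] + (m - (β - t)) ^ 2) / (4 * t) := by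
    rw [← integral_sub_const_sq hf, ← integral_div]
    refine integral_mono ((hf.integrable one_le_two).sub (integrable_const β)).pos_part
      (hsq.div_const _) fun x => ?_
    simpa only [sub_add] using max_zero_le_sq_div (y := f x - β) ht
  calc cvarObjective α P f β
      ≤ β + (1 - α)⁻¹ * ((Var[f; P] + (m - (β - t)) ^ 2) / (4 * t)) := by
        unfold cvarObjective; gcongr
    _ = m + t * α + Var[f; P] / (4 * t * (1 - α)) := by
        simp only [β]; field_simp; ring

theorem ciInf_cvarObjective_le (hα : α ∈ Set.Ioo 0 1) (hf : MemLp f 2 P) :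
    ⨅ β, cvarObjective α P f β ≤ ∫ x, f x ∂P + √Var[f; P] * √(α / (1 - α)) := by
  obtain ⟨hα0, hα1⟩ := hα
  have hbdd : BddBelow (Set.range (cvarObjective α P f)) :=
    ⟨_, Set.forall_mem_range.2 (integral_le_cvarObjective hα0.le hα1 (hf.integrable one_le_two))⟩
  refine le_add_sqrt_mul_sqrt_div hα0 (by linarith) (variance_nonneg f P) fun t ht => ?_
  exact (ciInf_le hbdd _).trans (cvarObjective_le_add_variance_div hα1 hf ht)

end

theorem ciInf_cvarObjective_affine_le {P : Measure ℝ} [IsProbabilityMeasure P]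
    {α Θ θ0 μ σ : ℝ} (hα : α ∈ Set.Ioo 0 1) (hσ : 0 ≤ σ) (h2 : MemLp id 2 P)
    (hmean : ∫ x, x ∂P = μ) (hvar : ∫ x, (x - μ) ^ 2 ∂P = σ ^ 2) :
    ⨅ β, cvarObjective α P (fun x => Θ * x + θ0) β
      ≤ Θ * μ + θ0 + |Θ| * σ * √(α / (1 - α)) := by
  have hint : Integrable (fun x : ℝ => x) P := h2.integrable one_le_two
  have hmul := variance_const_mul Θ id P
  simp only [id] at hmul
  have hVar : Var[fun x => Θ * x + θ0; P] = (|Θ| * σ) ^ 2 := by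
    rw [variance_add_const (by fun_prop), hmul, variance_eq_integral measurable_id.aemeasurable]
    simp only [id, hmean, hvar, mul_pow, sq_abs]
  calc ⨅ β, cvarObjective α P (fun x => Θ * x + θ0) β
      ≤ ∫ x, (Θ * x + θ0) ∂P + √Var[fun x => Θ * x + θ0; P] * √(α / (1 - α)) :=
        ciInf_cvarObjective_le hα ((h2.const_mul Θ).add (memLp_const θ0))
    _ = Θ * μ + θ0 + |Θ| * σ * √(α / (1 - α)) := by
        rw [hVar, Real.sqrt_sq (by positivity), integral_add (hint.const_mul Θ)
          (integrable_const θ0), integral_const_mul, hmean]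
        simp

lemma ciInf_cvarObjective_bernoulliMeasure {X : Type*} [MeasurableSpace X]
    [MeasurableSingletonClass X] {a b : X} {p : unitInterval} {α : ℝ} (hp : (p : ℝ) = 1 - α)
    (hp0 : 0 < (p : ℝ)) {f : X → ℝ} (hba : f b ≤ f a) :
    ⨅ β, cvarObjective α Ber(a, b, p) f β = f a := by
  have hobj (β : ℝ) : cvarObjective α Ber(a, b, p) f β
      = β + max (f a - β) 0 + (1 - α)⁻¹ * ((1 - p) * max (f b - β) 0) := by
    rw [cvarObjective, integral_bernoulliMeasure, smul_eq_mul, smul_eq_mul, ← hp]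
    field_simp
    ring
  have hlow (β : ℝ) : f a ≤ cvarObjective α Ber(a, b, p) f β := by
    have : 0 ≤ (1 - α)⁻¹ * ((1 - p) * max (f b - β) 0) := by
      rw [← hp]; have := p.2.2; positivity
    rw [hobj]; linarith [le_max_left (f a - β) 0]
  refine le_antisymm ((ciInf_le ⟨_, Set.forall_mem_range.2 hlow⟩ (f a)).trans_eq ?_)
    (le_ciInf hlow)
  rw [hobj, sub_self, max_self, max_eq_right (sub_nonpos.2 hba)]
  ring

section

variable {μ d r : ℝ} {p : unitInterval}

lemma integral_bernoulliMeasure_spread (hr : r ≠ 0) (hpr : p * r ^ 2 = 1 - p) :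
    ∫ x, x ∂Ber(μ + d * r, μ - d / r, p) = μ := by
  rw [integral_bernoulliMeasure, smul_eq_mul, smul_eq_mul]
  field_simp
  linear_combination d * hpr

lemma integral_sub_sq_bernoulliMeasure_spread (hr : r ≠ 0) (hpr : p * r ^ 2 = 1 - p) :
    ∫ x, (x - μ) ^ 2 ∂Ber(μ + d * r, μ - d / r, p) = d ^ 2 := by
  rw [integral_bernoulliMeasure, smul_eq_mul, smul_eq_mul]
  field_simp
  linear_combination d ^ 2 * (r ^ 2 - 1) * hpr

lemma ciInf_cvarObjective_affine_bernoulliMeasure {α Θ θ0 : ℝ} (hp : (p : ℝ) = 1 - α)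
    (hp0 : 0 < (p : ℝ)) (hr : 0 < r) (hΘd : 0 ≤ Θ * d) :
    ⨅ β, cvarObjective α Ber(μ + d * r, μ - d / r, p) (fun x => Θ * x + θ0) β
      = Θ * μ + θ0 + Θ * d * r := by
  rw [ciInf_cvarObjective_bernoulliMeasure hp hp0]
  · ring
  · rw [mul_sub, mul_add, ← mul_div_assoc, ← mul_assoc]
    linarith [div_nonneg hΘd hr.le, mul_nonneg hΘd hr.le]

end

theorem worst_case_cvar_closed_form
    (α Θ θ0 μ σ : ℝ) (hα : α ∈ Set.Ioo (0 : ℝ) 1) (hσ : 0 < σ) :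
    sSup { v : ℝ | ∃ P : Measure ℝ, IsProbabilityMeasure P ∧
        MemLp id 2 P ∧ (∫ x, x ∂P) = μ ∧ (∫ x, (x - μ) ^ 2 ∂P) = σ ^ 2 ∧
        v = ⨅ β : ℝ, (β + (1 - α)⁻¹ * ∫ x, max (Θ * x + θ0 - β) 0 ∂P) } =
    Θ * μ + θ0 + |Θ| * σ * Real.sqrt (α / (1 - α)) := by
  obtain ⟨hα0, hα1⟩ := hα
  set r := √(α / (1 - α))
  have hr : 0 < r := Real.sqrt_pos.2 (div_pos hα0 (by linarith))
  let p : unitInterval := ⟨1 - α, by linarith, by linarith⟩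
  have hpr : (p : ℝ) * r ^ 2 = 1 - p := by
    have hr2 : r ^ 2 = α / (1 - α) := Real.sq_sqrt (div_pos hα0 (by linarith)).le
    simp only [p, hr2]
    field_simp
    ring
  obtain ⟨d, hd2, hΘd⟩ : ∃ d, d ^ 2 = σ ^ 2 ∧ Θ * d = |Θ| * σ := by
    rcases le_or_gt 0 Θ with h | h
    · exact ⟨σ, rfl, by rw [abs_of_nonneg h]⟩
    · exact ⟨-σ, neg_sq σ, by rw [abs_of_neg h]; ring⟩
  refine IsGreatest.csSup_eq ⟨⟨Ber(μ + d * r, μ - d / r, p), inferInstance,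
    (memLp_two_iff_integrable_sq aestronglyMeasurable_id).2 (integrable_bernoulliMeasure _ _ _ _),
    integral_bernoulliMeasure_spread hr.ne' hpr,
    (integral_sub_sq_bernoulliMeasure_spread hr.ne' hpr).trans hd2, ?_⟩, ?_⟩
  · change _ = ⨅ β, cvarObjective α _ (fun x => Θ * x + θ0) β
    rw [ciInf_cvarObjective_affine_bernoulliMeasure rfl (by simp [p]; linarith) hr
      (hΘd ▸ by positivity), hΘd]
  · rintro v ⟨P, hP, h2, hmean, hvar, rfl⟩
    exact ciInf_cvarObjective_affine_le ⟨hα0, hα1⟩ hσ.le h2 hmean hvar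
end

section
/- Let m < 0 and σ > 0. Then sInf { P {x : x ≤ 0} : P is a Borel probability measure on ℝ with finite second moment, mean m and variance σ² } = m²/(m² + σ²). -/
/-!
The lower bound is Cantelli's one-sided inequality: for `t > 0` and any shift `u ≥ 0`, Markov's
inequality applied to `(X - 𝔼X + u)²` gives `ℙ(X ≥ 𝔼X + t) ≤ (Var X + u²) / (t + u)²`, and the
shift `u = Var X / t` turns this into `Var X / (Var X + t²)`; take `t = -m`. It is sharp: the law
with mass `v² / (v² + σ²)` at `m - σ² / v ≤ 0` and the rest at `m + v > 0` has mean `m` and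
variance `σ²`, and its mass on `(-∞, 0]` tends to `m² / (m² + σ²)` as `v ↓ -m`. The infimum is not
attained, since at `v = -m` the upper atom reaches `0`.
-/

open MeasureTheory ProbabilityTheory Filter Topology Set

section TwoPoint

variable {α : Type*} [MeasurableSpace α] {p : ℝ} {a b : α}

noncomputable def twoPoint (p : ℝ) (a b : α) : Measure α :=
  ENNReal.ofReal p • Measure.dirac a + ENNReal.ofReal (1 - p) • Measure.dirac b

lemma isProbabilityMeasure_twoPoint (hp₀ : 0 ≤ p) (hp₁ : p ≤ 1) :
    IsProbabilityMeasure (twoPoint p a b) := by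
  constructor
  simp [twoPoint, ← ENNReal.ofReal_add hp₀ (sub_nonneg.2 hp₁)]

lemma twoPoint_real_of_mem_of_notMem {s : Set α} (hs : MeasurableSet s) (hp₀ : 0 ≤ p)
    (ha : a ∈ s) (hb : b ∉ s) : (twoPoint p a b).real s = p := by
  simp [twoPoint, measureReal_def, Measure.dirac_apply' _ hs, ha, hb, hp₀]

variable [MeasurableSingletonClass α]

lemma integrable_twoPoint {E : Type*} [NormedAddCommGroup E] (f : α → E) :
    Integrable f (twoPoint p a b) :=
  ((integrable_dirac enorm_lt_top).smul_measure ENNReal.ofReal_ne_top).add_measure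
    ((integrable_dirac enorm_lt_top).smul_measure ENNReal.ofReal_ne_top)

lemma integral_twoPoint (hp₀ : 0 ≤ p) (hp₁ : p ≤ 1) (f : α → ℝ) :
    ∫ x, f x ∂twoPoint p a b = p * f a + (1 - p) * f b := by
  rw [twoPoint, integral_add_measure, integral_smul_measure, integral_smul_measure,
    integral_dirac, integral_dirac, ENNReal.toReal_ofReal hp₀,
    ENNReal.toReal_ofReal (sub_nonneg.2 hp₁), smul_eq_mul, smul_eq_mul]
  all_goals exact (integrable_dirac enorm_lt_top).smul_measure ENNReal.ofReal_ne_top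

end TwoPoint

section Cantelli

variable {Ω : Type*} [MeasurableSpace Ω] {μ : Measure Ω} [IsProbabilityMeasure μ] {X : Ω → ℝ}

lemma measureReal_ge_integral_add_le_variance_div (hX : MemLp X 2 μ) {t : ℝ} (ht : 0 < t) :
    μ.real {ω | μ[X] + t ≤ X ω} ≤ Var[X; μ] / (Var[X; μ] + t ^ 2) := by
  set V := Var[X; μ]
  set u := V / t
  have hu : 0 ≤ u := div_nonneg (variance_nonneg X μ) ht.le
  set Y : Ω → ℝ := fun ω ↦ X ω - μ[X] + u
  have hY : MemLp Y 2 μ := (hX.sub (memLp_const _)).add (memLp_const _)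
  have hY_mean : μ[Y] = u := by
    have hXint := hX.integrable one_le_two
    simp only [Y]
    rw [integral_add (by fun_prop) (integrable_const _), integral_sub hXint (integrable_const _)]
    simp
  have hY_var : Var[Y; μ] = V := by
    have hXm := hX.aestronglyMeasurable
    rw [variance_add_const (by fun_prop), variance_sub_const hXm]
  have hY_sq : μ[Y ^ 2] = V + u ^ 2 := by
    have h := variance_eq_sub hY
    rw [hY_var, hY_mean] at h
    linarith
  have hsub : {ω | μ[X] + t ≤ X ω} ⊆ {ω | (t + u) ^ 2 ≤ (Y ^ 2) ω} := fun ω hω ↦ by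
    have : t + u ≤ Y ω := by simp only [Y]; linarith [hω.out]
    exact pow_le_pow_left₀ (by positivity) this 2
  have markov := mul_meas_ge_le_integral_of_nonneg (.of_forall fun ω ↦ sq_nonneg (Y ω))
    hY.integrable_sq ((t + u) ^ 2)
  calc μ.real {ω | μ[X] + t ≤ X ω} ≤ μ.real {ω | (t + u) ^ 2 ≤ (Y ^ 2) ω} := measureReal_mono hsub
    _ ≤ (V + u ^ 2) / (t + u) ^ 2 := by
      rw [le_div_iff₀ (by positivity), mul_comm, ← hY_sq]
      exact markov
    _ = V / (V + t ^ 2) := by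
      simp only [u]
      field_simp
      ring

lemma sq_integral_div_le_measureReal_nonpos (hX : MemLp X 2 μ) (hneg : μ[X] < 0) :
    μ[X] ^ 2 / (μ[X] ^ 2 + Var[X; μ]) ≤ μ.real {ω | X ω ≤ 0} := by
  have hcover : 1 ≤ μ.real {ω | X ω ≤ 0} + μ.real {ω | μ[X] + -μ[X] ≤ X ω} :=
    calc 1 = μ.real ({ω | X ω ≤ 0} ∪ {ω | μ[X] + -μ[X] ≤ X ω}) := by
          rw [← probReal_univ (μ := μ)]
          congr 1
          ext ω
          simp [le_total]
      _ ≤ _ := measureReal_union_le _ _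
  have hcantelli := measureReal_ge_integral_add_le_variance_div hX (neg_pos.2 hneg)
  have hpos : 0 < μ[X] ^ 2 + Var[X; μ] := by nlinarith [variance_nonneg X μ]
  rw [neg_sq, le_div_iff₀ (by rwa [add_comm])] at hcantelli
  rw [div_le_iff₀ hpos]
  nlinarith

end Cantelli

section CantelliLaw

lemma sq_div_sq_add_sq_le_one (v σ : ℝ) : v ^ 2 / (v ^ 2 + σ ^ 2) ≤ 1 :=
  div_le_one_of_le₀ (le_add_of_nonneg_right (sq_nonneg σ)) (by positivity)

noncomputable def cantelliLaw (m σ v : ℝ) : Measure ℝ :=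
  twoPoint (v ^ 2 / (v ^ 2 + σ ^ 2)) (m - σ ^ 2 / v) (m + v)

variable {m σ v : ℝ}

instance : IsProbabilityMeasure (cantelliLaw m σ v) :=
  isProbabilityMeasure_twoPoint (by positivity) (sq_div_sq_add_sq_le_one v σ)

lemma integral_id_cantelliLaw (hv : v ≠ 0) : ∫ x, x ∂cantelliLaw m σ v = m := by
  rw [cantelliLaw, integral_twoPoint (by positivity) (sq_div_sq_add_sq_le_one v σ)]
  have : v ^ 2 + σ ^ 2 ≠ 0 := by positivity
  field_simp
  ring

lemma integral_sub_sq_cantelliLaw (hv : v ≠ 0) :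
    ∫ x, (x - m) ^ 2 ∂cantelliLaw m σ v = σ ^ 2 := by
  rw [cantelliLaw, integral_twoPoint (by positivity) (sq_div_sq_add_sq_le_one v σ)]
  have : v ^ 2 + σ ^ 2 ≠ 0 := by positivity
  field_simp
  ring

lemma cantelliLaw_real_Iic_zero (hm : m < 0) (hv : -m < v) :
    (cantelliLaw m σ v).real (Iic 0) = v ^ 2 / (v ^ 2 + σ ^ 2) := by
  have hv₀ : 0 < v := by linarith
  refine twoPoint_real_of_mem_of_notMem measurableSet_Iic (by positivity) ?_ ?_
  · simp only [mem_Iic]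
    linarith [div_nonneg (sq_nonneg σ) hv₀.le]
  · simp only [mem_Iic, not_le]
    linarith

end CantelliLaw

theorem worst_case_probability_closed_form_general
    (m σ : ℝ) (hm : m < 0) :
    sInf { v : ℝ | ∃ P : Measure ℝ, IsProbabilityMeasure P ∧
        MemLp id 2 P ∧ (∫ x, x ∂P) = m ∧ (∫ x, (x - m) ^ 2 ∂P) = σ ^ 2 ∧
        v = (P {x : ℝ | x ≤ 0}).toReal } =
    m ^ 2 / (m ^ 2 + σ ^ 2) := by
  set S := { v : ℝ | ∃ P : Measure ℝ, IsProbabilityMeasure P ∧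
        MemLp id 2 P ∧ (∫ x, x ∂P) = m ∧ (∫ x, (x - m) ^ 2 ∂P) = σ ^ 2 ∧
        v = (P {x : ℝ | x ≤ 0}).toReal }
  have lower : ∀ v ∈ S, m ^ 2 / (m ^ 2 + σ ^ 2) ≤ v := by
    rintro _ ⟨P, hP, hX, hmean, hvar, rfl⟩
    have h := sq_integral_div_le_measureReal_nonpos hX (by simpa [hmean] using hm)
    simp only [variance_eq_integral measurable_id.aemeasurable, id, hmean, hvar] at h
    exact h
  have attained : ∀ v, -m < v → v ^ 2 / (v ^ 2 + σ ^ 2) ∈ S := fun v hv ↦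
    ⟨cantelliLaw m σ v, inferInstance,
      (memLp_two_iff_integrable_sq aestronglyMeasurable_id).2 (integrable_twoPoint _),
      integral_id_cantelliLaw (by linarith), integral_sub_sq_cantelliLaw (by linarith),
      (cantelliLaw_real_Iic_zero hm hv).symm⟩
  have hlim : Tendsto (fun v ↦ v ^ 2 / (v ^ 2 + σ ^ 2)) (𝓝[>] (-m))
      (𝓝 (m ^ 2 / (m ^ 2 + σ ^ 2))) := by
    have hden : (-m) ^ 2 + σ ^ 2 ≠ 0 := by nlinarith [sq_nonneg σ]
    have : ContinuousAt (fun v : ℝ ↦ v ^ 2 / (v ^ 2 + σ ^ 2)) (-m) := by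
      fun_prop (disch := exact hden)
    simpa using this.tendsto.mono_left nhdsWithin_le_nhds
  refine IsGLB.csInf_eq ⟨lower, fun b hb ↦ ge_of_tendsto hlim ?_⟩
    ⟨_, attained (-m + 1) (by linarith)⟩
  exact eventually_nhdsWithin_of_forall fun v hv ↦ hb (attained v hv)

theorem worst_case_probability_closed_form
    (m σ : ℝ) (hm : m < 0) (hσ : 0 < σ) :
    sInf { v : ℝ | ∃ P : Measure ℝ, IsProbabilityMeasure P ∧
        MemLp id 2 P ∧ (∫ x, x ∂P) = m ∧ (∫ x, (x - m) ^ 2 ∂P) = σ ^ 2 ∧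
        v = (P {x : ℝ | x ≤ 0}).toReal } =
    m ^ 2 / (m ^ 2 + σ ^ 2) :=
  worst_case_probability_closed_form_general m σ hm
end
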